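/- arXiv:math/9201254 — 6 statements merged into one kernel-verified Lean document; each statement's English description precedes it below -/
import Mathlib

section
/- For a formal power series with real coefficients $(a_k)_{k\ge 0}$, if for every sequence $(r_k)$ of positive reals satisfying $r_k r_\ell \ge r_{k+\ell}$ and $r_k t^k \to 0$ for all $t>0$ there exists $\varepsilon>0$ such that the sequence $(a_k r_k \varepsilon^k)_k$ is bounded, then the power series $\sum_k a_k t^k$ has positive radius of convergence. -/
/-!
Argue by contraposition. If the series has radius of convergence zero, then
`c k = |a k| ^ (1 / k)` (`absRoot`) is unbounded, and so is its running maximum `m k`.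
Take `r k = ρ k ^ k` with `ρ k = (max 1 (m k)) ^ (-1/2)` (`invSqrtPartialSups`): since `ρ`
is positive, antitone and tends to `0`, the sequence `r` is submultiplicative and
`r k * t ^ k → 0` for every `t`. At a record index `k` (where `m k = c k`) we get
`|a k| * r k * ε ^ k = (√(c k) * ε) ^ k`, which exceeds `2 ^ k` as soon as
`c k ≥ 4 / ε ^ 2`, so no `ε > 0` makes `a k r k εᵏ` bounded.
-/

open Filter Topology Set

theorem pow_add_le_pow_mul_pow_of_antitone {ρ : ℕ → ℝ} (h0 : ∀ k, 0 ≤ ρ k) (hρ : Antitone ρ)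
    (k l : ℕ) : ρ (k + l) ^ (k + l) ≤ ρ k ^ k * ρ l ^ l := by
  rw [pow_add]
  exact mul_le_mul (pow_le_pow_left₀ (h0 _) (hρ (Nat.le_add_right k l)) k)
    (pow_le_pow_left₀ (h0 _) (hρ (Nat.le_add_left l k)) l) (pow_nonneg (h0 _) l)
    (pow_nonneg (h0 _) k)

theorem tendsto_pow_self_mul_pow_nhds_zero {ρ : ℕ → ℝ} (hρ : Tendsto ρ atTop (𝓝 0)) (t : ℝ) :
    Tendsto (fun k => ρ k ^ k * t ^ k) atTop (𝓝 0) := by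
  simp_rw [← mul_pow]
  have hρt : Tendsto (fun k => ρ k * t) atTop (𝓝 0) := by simpa using hρ.mul_const t
  have hsmall : ∀ᶠ k in atTop, ‖ρ k * t‖ ≤ 1 / 2 :=
    hρt.norm.eventually (ge_mem_nhds (by norm_num))
  refine squeeze_zero_norm' ?_
    (tendsto_pow_atTop_nhds_zero_of_lt_one (r := 1 / 2) (by norm_num) (by norm_num))
  filter_upwards [hsmall] with k hk
  rw [norm_pow]
  exact pow_le_pow_left₀ (norm_nonneg _) hk k

noncomputable def absRoot (a : ℕ → ℝ) (k : ℕ) : ℝ :=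
  |a k| ^ (k⁻¹ : ℝ)

theorem absRoot_pow (a : ℕ → ℝ) {k : ℕ} (hk : k ≠ 0) : absRoot a k ^ k = |a k| :=
  Real.rpow_inv_natCast_pow (abs_nonneg _) hk

theorem absRoot_nonneg (a : ℕ → ℝ) (k : ℕ) : 0 ≤ absRoot a k :=
  Real.rpow_nonneg (abs_nonneg _) _

theorem exists_summable_of_bddAbove_absRoot {a : ℕ → ℝ} (h : BddAbove (range (absRoot a))) :
    ∃ t₀ > (0 : ℝ), Summable fun k => |a k| * t₀ ^ k := by
  obtain ⟨T, hT⟩ := h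
  set M := max T 1
  have hM : 0 < M := by positivity
  have hbound : ∀ k, k ≠ 0 → |a k| ≤ M ^ k := fun k hk => by
    rw [← absRoot_pow a hk]
    exact pow_le_pow_left₀ (absRoot_nonneg a k)
      ((hT (mem_range_self k)).trans (le_max_left T 1)) k
  refine ⟨(2 * M)⁻¹, by positivity, ?_⟩
  refine Summable.of_norm_bounded_eventually_nat
    (summable_geometric_of_lt_one (r := 1 / 2) (by norm_num) (by norm_num)) ?_
  filter_upwards [eventually_ne_atTop 0] with k hk
  calc ‖|a k| * (2 * M)⁻¹ ^ k‖ = |a k| * (2 * M)⁻¹ ^ k := by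
        rw [Real.norm_eq_abs, abs_of_nonneg (by positivity)]
    _ ≤ M ^ k * (2 * M)⁻¹ ^ k := by gcongr; exact hbound k hk
    _ = (1 / 2) ^ k := by rw [← mul_pow]; congr 1; field_simp

theorem tendsto_partialSups_atTop {c : ℕ → ℝ} (hc : ¬BddAbove (range c)) :
    Tendsto (partialSups c) atTop atTop := by
  refine tendsto_atTop_atTop_of_monotone (partialSups c).monotone fun b => ?_
  obtain ⟨_, ⟨K, rfl⟩, hK⟩ := not_bddAbove_iff.mp hc b
  exact ⟨K, hK.le.trans (le_partialSups c K)⟩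

theorem exists_partialSups_eq_ge_of_not_bddAbove {c : ℕ → ℝ} (hc : ¬BddAbove (range c))
    (N : ℕ) (T : ℝ) :
    ∃ k, N < k ∧ T ≤ c k ∧ partialSups c k = c k := by
  obtain ⟨_, ⟨K, rfl⟩, hK⟩ := not_bddAbove_iff.mp hc (max T (partialSups c N))
  obtain ⟨k, hkK, hmax⟩ :=
    Finset.exists_max_image (Finset.Iic K) c ⟨K, Finset.mem_Iic.mpr le_rfl⟩
  simp only [Finset.mem_Iic] at hkK hmax
  have hck : c K ≤ c k := hmax K le_rfl
  refine ⟨k, ?_, ?_, ?_⟩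
  · by_contra! hkN
    have := le_partialSups_of_le c hkN
    have := le_max_right T (partialSups c N)
    linarith
  · linarith [le_max_left T (partialSups c N)]
  · exact le_antisymm (partialSups_le c k _ fun i hi => hmax i (hi.trans hkK))
      (le_partialSups c k)

noncomputable def invSqrtPartialSups (c : ℕ → ℝ) (k : ℕ) : ℝ :=
  (√(max 1 (partialSups c k)))⁻¹

namespace invSqrtPartialSups

variable {c : ℕ → ℝ}

theorem pos (k : ℕ) : 0 < invSqrtPartialSups c k := by
  unfold invSqrtPartialSups; positivity

theorem antitone : Antitone (invSqrtPartialSups c) := fun i j hij => by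
  unfold invSqrtPartialSups
  gcongr

theorem tendsto_zero (hc : ¬BddAbove (range c)) :
    Tendsto (invSqrtPartialSups c) atTop (𝓝 0) :=
  tendsto_inv_atTop_zero.comp <| Real.tendsto_sqrt_atTop.comp <|
    tendsto_atTop_mono (fun _ => le_max_right _ _) (tendsto_partialSups_atTop hc)

end invSqrtPartialSups

theorem exists_abs_mul_invSqrtPartialSups_absRoot_gt {a : ℕ → ℝ}
    (hc : ¬BddAbove (range (absRoot a))) {ε : ℝ} (hε : 0 < ε) (C : ℝ) :
    ∃ k, C < |a k * invSqrtPartialSups (absRoot a) k ^ k * ε ^ k| := by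
  obtain ⟨k, hNk, hTk, hrec⟩ :=
    exists_partialSups_eq_ge_of_not_bddAbove hc ⌈C⌉₊ (max 1 ((2 / ε) ^ 2))
  set x := absRoot a k
  have hx1 : 1 ≤ x := (le_max_left _ _).trans hTk
  have hρ : invSqrtPartialSups (absRoot a) k = (√x)⁻¹ := by
    rw [invSqrtPartialSups, hrec, max_eq_right hx1]
  have h2 : 2 ≤ √x * ε := by
    have : 2 / ε ≤ √x := Real.le_sqrt_of_sq_le ((le_max_right _ _).trans hTk)
    rwa [div_le_iff₀ hε] at this
  have ha : |a k| = x ^ k := (absRoot_pow a (by omega)).symm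
  refine ⟨k, ?_⟩
  calc C ≤ ⌈C⌉₊ := Nat.le_ceil C
    _ < (k : ℝ) := by exact_mod_cast hNk
    _ < 2 ^ k := by exact_mod_cast Nat.lt_two_pow_self
    _ ≤ (√x * ε) ^ k := pow_le_pow_left₀ (by norm_num) h2 k
    _ = |a k * invSqrtPartialSups (absRoot a) k ^ k * ε ^ k| := by
      rw [hρ, abs_mul, abs_mul, ha, abs_pow, abs_pow, abs_inv, abs_of_pos hε,
        abs_of_nonneg (Real.sqrt_nonneg x), ← mul_pow, ← mul_pow, ← div_eq_mul_inv,
        Real.div_sqrt]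

/-- If for every positive, submultiplicative (`rₖ r_ℓ ≥ r_{k+ℓ}`) sequence `(rₖ)` with
`rₖ tᵏ → 0` for all `t > 0` there is `ε > 0` such that `(aₖ rₖ εᵏ)` is bounded, then the
power series `∑ aₖ tᵏ` has positive radius of convergence. -/
theorem stmt_1 (a : ℕ → ℝ)
    (h : ∀ r : ℕ → ℝ, (∀ k, 0 < r k) → (∀ k l, r (k + l) ≤ r k * r l) →
      (∀ t > (0 : ℝ), Filter.Tendsto (fun k => r k * t ^ k) Filter.atTop (nhds 0)) →
      ∃ ε > (0 : ℝ), ∃ C : ℝ, ∀ k, |a k * r k * ε ^ k| ≤ C) :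
    ∃ t₀ > (0 : ℝ), Summable fun k => |a k| * t₀ ^ k := by
  by_contra! hcon
  have hc : ¬BddAbove (range (absRoot a)) := fun hb => by
    obtain ⟨t₀, ht₀, hsum⟩ := exists_summable_of_bddAbove_absRoot hb
    exact hcon t₀ ht₀ hsum
  have hρ := invSqrtPartialSups.pos (c := absRoot a)
  obtain ⟨ε, hε, C, hC⟩ := h (fun k => invSqrtPartialSups (absRoot a) k ^ k)
    (fun k => pow_pos (hρ k) k)
    (pow_add_le_pow_mul_pow_of_antitone (fun k => (hρ k).le) invSqrtPartialSups.antitone)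
    (fun t _ => tendsto_pow_self_mul_pow_nhds_zero (invSqrtPartialSups.tendsto_zero hc) t)
  obtain ⟨k, hk⟩ := exists_abs_mul_invSqrtPartialSups_absRoot_gt hc hε C
  exact (hC k).not_gt hk
end

section
/- For a formal power series with real coefficients $(a_k)$, the following are equivalent: (1) the series has positive radius of convergence; (2) the sequence $(a_k r_k)$ is bounded for every sequence $(r_k)$ with $r_k t^k \to 0$ for all $t > 0$. -/
/-!
If `|aₖ t₀ᵏ| ≤ C`, then `aₖ rₖ = (aₖ t₀ᵏ)(rₖ t₀⁻ᵏ)` is a product of two bounded sequences.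
Conversely, if `(aₖ tᵏ)` is unbounded for every `t > 0`, a diagonal argument gives indices
`k₀ < k₁ < ⋯` with `|a_{kₙ}| > (n + 1)^(kₙ + 1)`. Put `r_{kₙ} = (n + 1) / a_{kₙ}` and `rₖ = 0`
off this subsequence: then `aₖ rₖ` takes every value `n + 1`, while
`|r_{kₙ} t^{kₙ}| < (t / (n + 1))^{kₙ} → 0` for each fixed `t`.
-/

open Filter Function Set Topology

lemma frequently_lt_abs_of_not_bounded {f : ℕ → ℝ} (hf : ¬∃ C, ∀ k, |f k| ≤ C) (M : ℝ) :
    ∃ᶠ k in atTop, M < |f k| := by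
  by_contra hfreq
  simp only [not_frequently, not_lt] at hfreq
  obtain ⟨C, hC⟩ := IsBoundedUnder.bddAbove_range (f := fun k => |f k|) ⟨M, hfreq⟩
  exact hf ⟨C, fun k => hC ⟨k, rfl⟩⟩

lemma tendsto_cofinite_of_comp_of_support_subset {α β M : Type*} [Zero M] [TopologicalSpace M]
    {φ : α → β} {f : β → M} (hsupp : support f ⊆ range φ)
    (hf : Tendsto (f ∘ φ) cofinite (𝓝 0)) : Tendsto f cofinite (𝓝 0) := by
  intro s hs
  have hfin : {n | f (φ n) ∉ s}.Finite := hf hs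
  refine (hfin.image φ).subset fun k hk => ?_
  obtain ⟨n, rfl⟩ : k ∈ range φ := hsupp fun h0 => hk (by simpa [h0] using mem_of_mem_nhds hs)
  exact ⟨n, hk, rfl⟩

lemma exists_abs_mul_le_of_tendsto {a r : ℕ → ℝ} {t₀ C : ℝ} (ht₀ : 0 < t₀)
    (ha : ∀ k, |a k * t₀ ^ k| ≤ C) (hr : Tendsto (fun k => r k * t₀⁻¹ ^ k) atTop (𝓝 0)) :
    ∃ C', ∀ k, |a k * r k| ≤ C' := by
  obtain ⟨M, hM⟩ := hr.abs.bddAbove_range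
  refine ⟨C * M, fun k => ?_⟩
  have hsplit : a k * r k = (a k * t₀ ^ k) * (r k * t₀⁻¹ ^ k) := by
    rw [inv_pow]; field_simp
  rw [hsplit, abs_mul]
  exact mul_le_mul (ha k) (hM ⟨k, rfl⟩) (abs_nonneg _) ((abs_nonneg _).trans (ha 0))

lemma abs_div_mul_pow_le {b c t : ℝ} {k : ℕ} (hc : 0 < c) (ht : 0 ≤ t)
    (hb : c < |b * c⁻¹ ^ k|) : |c / b * t ^ k| ≤ (t / c) ^ k := by
  have hck : 0 < c ^ k := pow_pos hc k
  rw [abs_mul, inv_pow, abs_of_pos (inv_pos.2 hck), ← div_eq_mul_inv, lt_div_iff₀ hck] at hb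
  rw [abs_mul, abs_div, abs_of_pos hc, abs_of_nonneg (pow_nonneg ht k), div_pow,
    div_mul_eq_mul_div, ← mul_div_mul_left (t ^ k) (c ^ k) hc.ne']
  exact div_le_div_of_nonneg_left (by positivity) (by positivity) hb.le

lemma exists_tendsto_not_bounded_of_forall_not_bounded {a : ℕ → ℝ}
    (ha : ∀ t > (0 : ℝ), ¬∃ C, ∀ k, |a k * t ^ k| ≤ C) :
    ∃ r : ℕ → ℝ, (∀ t > (0 : ℝ), Tendsto (fun k => r k * t ^ k) atTop (𝓝 0)) ∧
      ¬∃ C, ∀ k, |a k * r k| ≤ C := by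
  obtain ⟨φ, hφ, hφa⟩ := extraction_forall_of_frequently fun n =>
    frequently_lt_abs_of_not_bounded (ha ((n : ℝ) + 1)⁻¹ (by positivity)) ((n : ℝ) + 1)
  have ha_ne : ∀ n, a (φ n) ≠ 0 := fun n h0 => by
    have := hφa n
    rw [h0, zero_mul, abs_zero] at this
    linarith
  set r : ℕ → ℝ := extend φ (fun n => ((n : ℝ) + 1) / a (φ n)) 0 with hr
  have hr_φ : ∀ n, r (φ n) = ((n : ℝ) + 1) / a (φ n) := hφ.injective.extend_apply _ _
  refine ⟨r, fun t ht => ?_, fun ⟨C, hC⟩ => ?_⟩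
  · rw [← Nat.cofinite_eq_atTop]
    refine tendsto_cofinite_of_comp_of_support_subset (φ := φ) (fun k hk => ?_) ?_
    · by_contra hkφ
      exact hk (by simp [hr, extend_apply' _ _ _ hkφ])
    rw [Nat.cofinite_eq_atTop]
    have hlim : Tendsto (fun n : ℕ => t / ((n : ℝ) + 1)) atTop (𝓝 0) := by
      simpa [div_eq_mul_one_div t] using (tendsto_one_div_add_atTop_nhds_zero_nat).const_mul t
    refine squeeze_zero_norm' ?_ hlim
    filter_upwards [eventually_ge_atTop 1, eventually_ge_atTop ⌈t⌉₊] with n hn1 hnt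
    have htn : t / ((n : ℝ) + 1) ≤ 1 := by
      rw [div_le_one (by positivity)]
      linarith [Nat.le_ceil t, (Nat.cast_le (α := ℝ)).2 hnt]
    calc ‖r (φ n) * t ^ φ n‖ ≤ (t / ((n : ℝ) + 1)) ^ φ n := by
          rw [Real.norm_eq_abs, hr_φ]
          exact abs_div_mul_pow_le (by positivity) ht.le (hφa n)
      _ ≤ t / ((n : ℝ) + 1) :=
          pow_le_of_le_one (by positivity) htn (by have := hφ.le_apply (x := n); omega)
  · obtain ⟨n, hn⟩ := exists_nat_gt C
    have := hC (φ n)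
    rw [hr_φ, mul_div_cancel₀ _ (ha_ne n), abs_of_pos (by positivity)] at this
    linarith

/-- A power series `∑ aₖ tᵏ` has positive radius of convergence (i.e. `(aₖ t₀ᵏ)` is bounded
for some `t₀ > 0`) if and only if the sequence `(aₖ rₖ)` is bounded for every sequence
`(rₖ)` with `rₖ tᵏ → 0` for all `t > 0`. -/
theorem stmt_2 (a : ℕ → ℝ) :
    (∃ t₀ > (0 : ℝ), ∃ C : ℝ, ∀ k, |a k * t₀ ^ k| ≤ C) ↔
    (∀ r : ℕ → ℝ,
      (∀ t > (0 : ℝ), Filter.Tendsto (fun k => r k * t ^ k) Filter.atTop (nhds 0)) →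
      ∃ C : ℝ, ∀ k, |a k * r k| ≤ C) := by
  constructor
  · rintro ⟨t₀, ht₀, C, hC⟩ r hr
    exact exists_abs_mul_le_of_tendsto ht₀ hC (hr t₀⁻¹ (inv_pos.2 ht₀))
  · intro hall
    by_contra hno
    obtain ⟨r, hr, hunbdd⟩ :=
      exists_tendsto_not_bounded_of_forall_not_bounded fun t ht hbdd => hno ⟨t, ht, hbdd⟩
    exact hunbdd (hall r hr)
end

section
/- Let $f : E^k \to F$ be a $k$-linear symmetric map between real vector spaces. Then for all $a, x \in E$, $f(x,\dots,x) = \frac{1}{k!} \sum_{j=0}^{k} (-1)^{k-j} \binom{k}{j} f\big((a + j x)^k\big)$, where $(a+jx)^k$ denotes the $k$-tuple all of whose entries equal $a + j x$. -/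
/-!
Restricted to the line `t ↦ a + t • x`, the diagonal of a `k`-linear map becomes a polynomial
in `t` of degree at most `k`, whose coefficient of `t ^ k` is `f (x, …, x)`. The `k`-th forward
difference with step `1` kills every lower power of `t` and sends `t ^ k` to `k!`; expanding
that difference at `0` gives the alternating binomial sum.
-/

open Finset fwdDiff

section fwdDiff

variable {M R G : Type*} [AddCommMonoid M] [AddCommGroup G]

theorem fwdDiff_iter_smul_const [Ring R] [Module R G] (h : M) (f : M → R) (g : G) (n : ℕ) :
    (Δ_[h])^[n] (fun y ↦ f y • g) = fun y ↦ (Δ_[h])^[n] f y • g := by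
  induction n generalizing f with
  | zero => rfl
  | succ n ih => rw [Function.iterate_succ_apply, fwdDiff_smul_const]; exact ih _

theorem fwdDiff_iter_sum_pow_smul [CommRing R] [Module R G] {ι : Type*} (s : Finset ι)
    (d : ι → ℕ) (c : ι → G) {n : ℕ} (hd : ∀ i ∈ s, d i ≤ n) :
    (Δ_[1])^[n] (fun r : R ↦ ∑ i ∈ s, r ^ d i • c i) =
      fun _ ↦ n.factorial • ∑ i ∈ s with d i = n, c i := by
  have hterm : ∀ i ∈ s, (Δ_[1])^[n] (fun r : R ↦ r ^ d i • c i) =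
      fun _ ↦ if d i = n then n.factorial • c i else 0 := by
    intro i hi
    rw [fwdDiff_iter_smul_const]
    split_ifs with hdi
    · subst hdi
      simp [fwdDiff_iter_eq_factorial, Nat.cast_smul_eq_nsmul]
    · simp [fwdDiff_iter_pow_eq_zero_of_lt (lt_of_le_of_ne (hd i hi) hdi)]
  rw [← Finset.sum_fn, fwdDiff_iter_finsetSum, Finset.sum_congr rfl hterm]
  ext
  simp [Finset.sum_filter, Finset.smul_sum]

end fwdDiff

namespace MultilinearMap

variable {R E G ι : Type*} [AddCommMonoid E] [AddCommGroup G] [Fintype ι]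

theorem map_const_add_smul [CommSemiring R] [Module R E] [Module R G] [DecidableEq ι]
    (f : MultilinearMap R (fun _ : ι ↦ E) G) (a x : E) (t : R) :
    f (fun _ ↦ a + t • x) = ∑ s : Finset ι, t ^ #s • f (s.piecewise (fun _ ↦ x) (fun _ ↦ a)) := by
  rw [show (fun _ : ι ↦ a + t • x) = (fun _ ↦ t • x) + fun _ ↦ a from funext fun _ ↦ add_comm _ _,
    f.map_add_univ]
  refine Finset.sum_congr rfl fun s _ ↦ ?_
  rw [← Finset.prod_const, ← f.map_piecewise_smul]
  congr 1
  ext i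
  by_cases hi : i ∈ s <;> simp [hi]

theorem fwdDiff_iter_map_const_add_smul [CommRing R] [Module R E] [Module R G]
    (f : MultilinearMap R (fun _ : ι ↦ E) G) (a x : E) :
    (Δ_[1])^[Fintype.card ι] (fun t : R ↦ f (fun _ ↦ a + t • x)) =
      fun _ ↦ (Fintype.card ι).factorial • f (fun _ ↦ x) := by
  classical
  simp_rw [f.map_const_add_smul]
  rw [fwdDiff_iter_sum_pow_smul _ _ _ fun s _ ↦ s.card_le_univ]
  simp [Finset.card_eq_iff_eq_univ, Finset.filter_eq']

end MultilinearMap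

theorem stmt_4_general {E F : Type*} [AddCommGroup E] [Module ℝ E] [AddCommGroup F] [Module ℝ F]
    (k : ℕ) (f : MultilinearMap ℝ (fun _ : Fin k => E) F)
    (a x : E) :
    f (fun _ => x) = (k.factorial : ℝ)⁻¹ •
      ∑ j ∈ range (k + 1), ((-1 : ℝ) ^ (k - j) * (k.choose j : ℝ)) •
        f (fun _ => a + (j : ℝ) • x) := by
  have hdiff := congr_fun (f.fwdDiff_iter_map_const_add_smul a x) 0
  rw [Fintype.card_fin, fwdDiff_iter_eq_sum_shift] at hdiff
  rw [eq_inv_smul_iff₀ (by positivity), Nat.cast_smul_eq_nsmul ℝ k.factorial, ← hdiff]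
  refine Finset.sum_congr rfl fun j _ ↦ ?_
  rw [← Int.cast_smul_eq_zsmul ℝ]
  simp

/-- For a symmetric `k`-linear map `f` and vectors `a, x`:
`f(x,…,x) = (1/k!) ∑_{j=0}^{k} (-1)^{k-j} (k choose j) f((a + j·x)ᵏ)`. -/
theorem stmt_4 {E F : Type*} [AddCommGroup E] [Module ℝ E] [AddCommGroup F] [Module ℝ F]
    (k : ℕ) (f : MultilinearMap ℝ (fun _ : Fin k => E) F)
    (hsymm : ∀ (σ : Equiv.Perm (Fin k)) (x : Fin k → E), f (x ∘ σ) = f x)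
    (a x : E) :
    f (fun _ => x) = (k.factorial : ℝ)⁻¹ •
      ∑ j ∈ range (k + 1), ((-1 : ℝ) ^ (k - j) * (k.choose j : ℝ)) •
        f (fun _ => a + (j : ℝ) • x) :=
  stmt_4_general k f a x
end

section
/- Let $E$ be a real or complex Banach space and, for each $k \in \mathbb{N}$, let $f_k$ be a continuous symmetric $k$-linear scalar-valued form on $E$. If the set $\{f_k(x,\dots,x) : k \in \mathbb{N}, x \in U\}$ is bounded for some neighborhood $U$ of $0$, then the set $\{f_k(x_1,\dots,x_k) : k \in \mathbb{N}, x_j \in V\}$ is bounded for some neighborhood $V$ of $0$. -/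
open Finset

noncomputable def psgn {𝕜 : Type*} [RCLike 𝕜] (b : Bool) : 𝕜 := if b then 1 else -1

lemma psgn_norm {𝕜 : Type*} [RCLike 𝕜] (b : Bool) : ‖(psgn b : 𝕜)‖ = 1 := by
  cases b <;> simp [psgn]

lemma psgn_sum_pow {𝕜 : Type*} [RCLike 𝕜] (n : ℕ) :
    (∑ b : Bool, (psgn b : 𝕜) ^ n) = if Even n then 2 else 0 := by
  rcases Nat.even_or_odd n with hn | hn
  · rw [if_pos hn]
    simp only [psgn, Fintype.sum_bool, if_true, one_pow]
    norm_num [Even.neg_one_pow hn]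
  · simp [psgn, hn.neg_pow, Nat.not_even_iff_odd.2 hn]

/-- Polarization identity for symmetric multilinear maps. -/
lemma polarization {𝕜 E : Type*} [RCLike 𝕜] [NormedAddCommGroup E] [NormedSpace 𝕜 E]
    {k : ℕ} (f : ContinuousMultilinearMap 𝕜 (fun _ : Fin k => E) 𝕜)
    (hsymm : ∀ (σ : Equiv.Perm (Fin k)) (x : Fin k → E), f (x ∘ σ) = f x)
    (x : Fin k → E) :
    ∑ ε : Fin k → Bool, (∏ i, (psgn (ε i) : 𝕜)) • f (fun _ => ∑ j, (psgn (ε j) : 𝕜) • x j)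
      = ((2 : 𝕜) ^ k * (Nat.factorial k : 𝕜)) • f x := by
  classical
  have expand : ∀ ε : Fin k → Bool,
      f (fun _ => ∑ j, (psgn (ε j) : 𝕜) • x j)
        = ∑ r : Fin k → Fin k, (∏ i, (psgn (ε (r i)) : 𝕜)) • f (x ∘ r) := by
    intro ε
    rw [f.map_sum (g := fun _ j => (psgn (ε j) : 𝕜) • x j)]
    refine Finset.sum_congr rfl fun r _ => ?_
    exact f.map_smul_univ (fun i => (psgn (ε (r i)) : 𝕜)) (x ∘ r)
  simp_rw [expand, Finset.smul_sum, smul_smul]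
  rw [Finset.sum_comm]
  have coeff : ∀ r : Fin k → Fin k,
      (∑ ε : Fin k → Bool, (∏ i, (psgn (ε i) : 𝕜)) * ∏ i, (psgn (ε (r i)) : 𝕜))
        = if Function.Bijective r then (2 : 𝕜) ^ k else 0 := by
    intro r
    have fib : ∀ (ε : Fin k → Bool), (∏ j, (psgn (ε (r j)) : 𝕜))
        = ∏ i : Fin k, (psgn (ε i) : 𝕜) ^ (univ.filter fun j => r j = i).card := by
      intro ε
      rw [← Finset.prod_fiberwise' univ r (fun i => (psgn (ε i) : 𝕜))]
      exact Finset.prod_congr rfl fun i _ => (Finset.prod_const _)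
    have step : ∀ ε : Fin k → Bool,
        (∏ i, (psgn (ε i) : 𝕜)) * ∏ i, (psgn (ε (r i)) : 𝕜)
          = ∏ i : Fin k, (psgn (ε i) : 𝕜) ^ (1 + (univ.filter fun j => r j = i).card) := by
      intro ε
      rw [fib, ← Finset.prod_mul_distrib]
      exact Finset.prod_congr rfl fun i _ => by rw [pow_add, pow_one]
    simp_rw [step]
    rw [← Fintype.prod_sum
      (f := fun i b => (psgn b : 𝕜) ^ (1 + (univ.filter fun j => r j = i).card))]
    by_cases hr : Function.Bijective r
    · rw [if_pos hr]
      have hcard : ∀ i : Fin k, (univ.filter fun j => r j = i).card = 1 := by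
        intro i
        have : (univ.filter fun j => r j = i) = {(Equiv.ofBijective r hr).symm i} := by
          ext j
          simp only [Finset.mem_filter, Finset.mem_univ, true_and, Finset.mem_singleton]
          constructor
          · intro hj
            exact ((Equiv.ofBijective r hr).symm_apply_eq.2 hj.symm).symm
          · intro hj; subst hj
            exact (Equiv.ofBijective r hr).apply_symm_apply i
        rw [this, Finset.card_singleton]
      simp only [hcard]
      rw [Finset.prod_congr rfl fun i _ => psgn_sum_pow (𝕜 := 𝕜) 2]
      simp
    · rw [if_neg hr]
      have hns : ¬ Function.Surjective r := fun hs =>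
        hr ⟨Finite.injective_iff_surjective.2 hs, hs⟩
      rw [Function.Surjective] at hns
      push_neg at hns
      obtain ⟨i, hi⟩ := hns
      refine Finset.prod_eq_zero (Finset.mem_univ i) ?_
      have hfe : (univ.filter fun j => r j = i) = ∅ := by
        ext j
        simp only [Finset.mem_filter, Finset.mem_univ, true_and, Finset.notMem_empty,
          iff_false]
        exact hi j
      rw [psgn_sum_pow, hfe]
      simp [Nat.even_add_one]
  have hterm : ∀ r : Fin k → Fin k,
      (∑ ε : Fin k → Bool, ((∏ i, (psgn (ε i) : 𝕜)) * ∏ i, (psgn (ε (r i)) : 𝕜)) • f (x ∘ r))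
        = if Function.Bijective r then (2 : 𝕜) ^ k • f x else 0 := by
    intro r
    rw [← Finset.sum_smul, coeff r]
    by_cases hr : Function.Bijective r
    · rw [if_pos hr, if_pos hr]
      congr 1
      exact hsymm (Equiv.ofBijective r hr) x
    · rw [if_neg hr, if_neg hr, zero_smul]
  rw [Finset.sum_congr rfl fun r _ => hterm r, ← Finset.sum_filter, Finset.sum_const]
  have hcard : (univ.filter fun r : Fin k → Fin k => Function.Bijective r).card
      = Nat.factorial k := by
    have hc : (univ.filter fun r : Fin k → Fin k => Function.Bijective r).card
        = (univ : Finset (Equiv.Perm (Fin k))).card := by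
      refine Finset.card_bij (fun r hr => Equiv.ofBijective r
        (by simpa using (Finset.mem_filter.1 hr).2)) (fun _ _ => Finset.mem_univ _) ?_ ?_
      · intro r hr r' hr' hrr'
        exact congrArg (fun e : Equiv.Perm (Fin k) => (e : Fin k → Fin k)) hrr'
      · intro σ _
        refine ⟨⇑σ, Finset.mem_filter.2 ⟨Finset.mem_univ _, σ.bijective⟩, ?_⟩
        ext j; rfl
    rw [hc, ← Fintype.card, Fintype.card_perm, Fintype.card_fin]
  rw [hcard, ← Nat.cast_smul_eq_nsmul 𝕜, smul_smul, mul_comm]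

lemma pow_self_le_three_pow_mul_factorial (k : ℕ) :
    (k : ℝ) ^ k ≤ 3 ^ k * Nat.factorial k := by
  have h1 : (k : ℝ) ^ k / Nat.factorial k ≤ Real.exp k :=
    Real.pow_div_factorial_le_exp (k : ℝ) (Nat.cast_nonneg k) k
  have h2 : Real.exp (k : ℝ) = Real.exp 1 ^ k := by
    rw [← Real.exp_nat_mul, mul_one]
  have h3 : Real.exp 1 ^ k ≤ 3 ^ k := by
    apply pow_le_pow_left₀ (Real.exp_pos 1).le
    linarith [Real.exp_one_lt_d9]
  have hfac : (0 : ℝ) < Nat.factorial k := by positivity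
  rw [div_le_iff₀ hfac] at h1
  calc (k : ℝ) ^ k ≤ Real.exp k * Nat.factorial k := h1
    _ ≤ 3 ^ k * Nat.factorial k := by
        rw [h2]; exact mul_le_mul_of_nonneg_right h3 hfac.le

/-- If the values of a sequence of continuous symmetric `k`-linear scalar forms on the
diagonal of some neighborhood of `0` are uniformly bounded, then their values on `k`-tuples
from some neighborhood of `0` are uniformly bounded. -/
theorem stmt_6 {𝕜 E : Type*} [RCLike 𝕜] [NormedAddCommGroup E] [NormedSpace 𝕜 E]
    [CompleteSpace E]
    (f : ∀ k : ℕ, ContinuousMultilinearMap 𝕜 (fun _ : Fin k => E) 𝕜)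
    (hsymm : ∀ (k : ℕ) (σ : Equiv.Perm (Fin k)) (x : Fin k → E), f k (x ∘ σ) = f k x)
    (h : ∃ U ∈ nhds (0 : E), ∃ C : ℝ, ∀ (k : ℕ), ∀ x ∈ U, ‖f k (fun _ => x)‖ ≤ C) :
    ∃ V ∈ nhds (0 : E), ∃ C : ℝ, ∀ (k : ℕ) (x : Fin k → E),
      (∀ j, x j ∈ V) → ‖f k x‖ ≤ C := by
  obtain ⟨U, hU, C, hC⟩ := h
  obtain ⟨r, hr, hrU⟩ := Metric.mem_nhds_iff.1 hU
  have hC0 : 0 ≤ C :=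
    le_trans (norm_nonneg _) (hC 0 0 (hrU (Metric.mem_ball_self hr)))
  -- diagonal bound at arbitrary radius
  have hdiag : ∀ (k : ℕ) (y : E), ‖f k (fun _ => y)‖ ≤ C * (2 * ‖y‖ / r) ^ k := by
    intro k y
    by_cases hy : y = 0
    · subst hy
      rcases Nat.eq_zero_or_pos k with hk | hk
      · subst hk
        simpa using hC 0 0 (hrU (Metric.mem_ball_self hr))
      · have hne : Nonempty (Fin k) := ⟨⟨0, hk⟩⟩
        have : (fun _ : Fin k => (0 : E)) = 0 := rfl
        rw [this, (f k).map_zero]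
        simp only [norm_zero]
        positivity
    · set c : 𝕜 := ((2 * ‖y‖ / r : ℝ) : 𝕜) with hc
      have hpos : (0 : ℝ) < 2 * ‖y‖ / r := by
        have : 0 < ‖y‖ := norm_pos_iff.2 hy
        positivity
      have hc0 : c ≠ 0 := by
        simp only [hc, ne_eq, map_eq_zero]
        exact_mod_cast hpos.ne'
      set z : E := c⁻¹ • y with hz
      have hzy : ∀ i : Fin k, y = c • z := by
        intro i
        rw [hz, smul_inv_smul₀ hc0]
      have hnz : ‖z‖ < r := by
        rw [hz, norm_smul, norm_inv]
        have hcn : ‖c‖ = 2 * ‖y‖ / r := by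
          rw [hc, RCLike.norm_ofReal, abs_of_pos hpos]
        rw [hcn]
        rw [inv_mul_lt_iff₀ hpos]
        have h0 : 0 < ‖y‖ := norm_pos_iff.2 hy
        have hcc : 2 * ‖y‖ / r * r = 2 * ‖y‖ := div_mul_cancel₀ _ hr.ne'
        linarith
      have heq : f k (fun _ => y) = (∏ _i : Fin k, c) • f k (fun _ => z) := by
        rw [← (f k).map_smul_univ (fun _ => c) (fun _ => z)]
        congr 1
        funext i
        exact hzy i
      rw [heq, norm_smul, norm_prod]
      have hcn : ‖c‖ = 2 * ‖y‖ / r := by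
        rw [hc, RCLike.norm_ofReal, abs_of_pos hpos]
      simp only [hcn, Finset.prod_const, Finset.card_univ, Fintype.card_fin]
      rw [mul_comm]
      exact mul_le_mul_of_nonneg_right (hC k z (hrU (by simpa [Metric.mem_ball] using hnz)))
        (by positivity)
  refine ⟨Metric.ball 0 (r / 6), Metric.ball_mem_nhds 0 (by positivity), C, ?_⟩
  intro k x hx
  have hpol := polarization (f k) (hsymm k) x
  have key : (2 : ℝ) ^ k * (Nat.factorial k) * ‖f k x‖
      ≤ 2 ^ k * (C * ((k : ℝ) / 3) ^ k) := by
    have hnorm : ‖((2 : 𝕜) ^ k * (Nat.factorial k : 𝕜)) • f k x‖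
        = (2 : ℝ) ^ k * (Nat.factorial k) * ‖f k x‖ := by
      rw [norm_smul]
      congr 1
      have : ((2 : 𝕜) ^ k * (Nat.factorial k : 𝕜)) = ((2 ^ k * Nat.factorial k : ℕ) : 𝕜) := by
        push_cast; ring
      rw [this, RCLike.norm_natCast]
      push_cast; ring
    rw [← hnorm, ← hpol]
    calc ‖∑ ε : Fin k → Bool, (∏ i, (psgn (ε i) : 𝕜)) •
          f k (fun _ => ∑ j, (psgn (ε j) : 𝕜) • x j)‖
        ≤ ∑ ε : Fin k → Bool, ‖(∏ i, (psgn (ε i) : 𝕜)) •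
          f k (fun _ => ∑ j, (psgn (ε j) : 𝕜) • x j)‖ := norm_sum_le _ _
      _ ≤ ∑ _ε : Fin k → Bool, C * ((k : ℝ) / 3) ^ k := by
          refine Finset.sum_le_sum fun ε _ => ?_
          rw [norm_smul, norm_prod]
          simp only [psgn_norm, Finset.prod_const, one_pow, Finset.card_univ, one_mul]
          refine le_trans (hdiag k _) ?_
          refine mul_le_mul_of_nonneg_left ?_ hC0
          refine pow_le_pow_left₀ (by positivity) ?_ k
          have hsum : ‖∑ j, (psgn (ε j) : 𝕜) • x j‖ ≤ (k : ℝ) * (r / 6) := by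
            refine le_trans (norm_sum_le _ _) ?_
            calc ∑ j, ‖(psgn (ε j) : 𝕜) • x j‖ ≤ ∑ _j : Fin k, r / 6 := by
                  refine Finset.sum_le_sum fun j _ => ?_
                  rw [norm_smul, psgn_norm, one_mul]
                  exact le_of_lt (by simpa [Metric.mem_ball] using hx j)
              _ = (k : ℝ) * (r / 6) := by simp [Finset.sum_const, Finset.card_univ]
          calc 2 * ‖∑ j, (psgn (ε j) : 𝕜) • x j‖ / r ≤ 2 * ((k : ℝ) * (r / 6)) / r := by
                gcongr
              _ = (k : ℝ) / 3 := by field_simp; ring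
      _ = 2 ^ k * (C * ((k : ℝ) / 3) ^ k) := by
          rw [Finset.sum_const, Finset.card_univ, Fintype.card_fun, Fintype.card_bool,
            Fintype.card_fin, nsmul_eq_mul]
          push_cast
          ring
  have hkk : ((k : ℝ) / 3) ^ k ≤ Nat.factorial k := by
    rw [div_pow, div_le_iff₀ (by positivity : (0:ℝ) < 3 ^ k)]
    calc (k : ℝ) ^ k ≤ 3 ^ k * Nat.factorial k := pow_self_le_three_pow_mul_factorial k
      _ = (Nat.factorial k : ℝ) * 3 ^ k := by ring
  have hpos2 : (0 : ℝ) < 2 ^ k * Nat.factorial k := by positivity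
  refine le_of_mul_le_mul_left ?_ hpos2
  calc 2 ^ k * (Nat.factorial k : ℝ) * ‖f k x‖ ≤ 2 ^ k * (C * ((k : ℝ) / 3) ^ k) := key
    _ ≤ 2 ^ k * (C * Nat.factorial k) := by
        refine mul_le_mul_of_nonneg_left (mul_le_mul_of_nonneg_left hkk hC0) (by positivity)
    _ = 2 ^ k * (Nat.factorial k : ℝ) * C := by ring
end

section
/- Let $E$ be a real Fréchet space (or Banach space), $f_k$ continuous symmetric $k$-linear real-valued forms on $E$ for each $k \in \mathbb{N}$. If $\sum_k f_k(x^k)$ converges pointwise for all $x$ in an absorbing subset of $E$, then the set $\{f_k(x^k) : k \in \mathbb{N}, x \in U\}$ is bounded for some neighborhood $U$ of zero. -/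
open Filter

section Aux
open Finset


noncomputable def Sfd (k i : ℕ) : ℝ :=
  ∑ j ∈ range (k+1), (-1:ℝ)^(k-j) * (k.choose j) * (j:ℝ)^i

lemma Sfd_rec (k i : ℕ) :
    Sfd (k+1) (i+1) = ∑ t ∈ range (i+1), ((i+1).choose t : ℝ) * Sfd k t := by
  have h0 : Sfd (k+1) (i+1)
      = ∑ m ∈ range (k+1), (-1:ℝ)^(k-m) * (((k.choose m : ℝ)) + (k.choose (m+1) : ℝ))
          * ((m:ℝ)+1)^(i+1) := by
    rw [Sfd, Finset.sum_range_succ']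
    simp only [Nat.cast_zero, zero_pow (Nat.succ_ne_zero i), mul_zero, add_zero]
    refine Finset.sum_congr rfl fun m hm => ?_
    rw [Nat.succ_sub_succ, Nat.choose_succ_succ]
    push_cast
    ring
  -- split
  have h1 : Sfd (k+1) (i+1)
      = (∑ m ∈ range (k+1), (-1:ℝ)^(k-m) * (k.choose m : ℝ) * ((m:ℝ)+1)^(i+1))
        + (∑ m ∈ range (k+1), (-1:ℝ)^(k-m) * (k.choose (m+1) : ℝ) * ((m:ℝ)+1)^(i+1)) := by
    rw [h0, ← Finset.sum_add_distrib]
    refine Finset.sum_congr rfl fun m hm => by ring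
  -- second sum = - Sfd k (i+1)
  have h2 : (∑ m ∈ range (k+1), (-1:ℝ)^(k-m) * (k.choose (m+1) : ℝ) * ((m:ℝ)+1)^(i+1))
      = - Sfd k (i+1) := by
    rw [Finset.sum_range_succ, Nat.choose_succ_self, Nat.cast_zero, mul_zero, zero_mul, add_zero]
    rw [Sfd, Finset.sum_range_succ']
    simp only [Nat.cast_zero, zero_pow (Nat.succ_ne_zero i), mul_zero, add_zero]
    rw [← Finset.sum_neg_distrib]
    refine Finset.sum_congr rfl fun m hm => ?_
    have hm' : m < k := Finset.mem_range.mp hm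
    have : k - m = (k - (m+1)) + 1 := by omega
    rw [this]
    push_cast
    ring
  -- first sum : expand (m+1)^(i+1)
  have h3 : (∑ m ∈ range (k+1), (-1:ℝ)^(k-m) * (k.choose m : ℝ) * ((m:ℝ)+1)^(i+1))
      = (∑ t ∈ range (i+1), ((i+1).choose t : ℝ) * Sfd k t) + Sfd k (i+1) := by
    have hexp : ∀ m : ℕ, ((m:ℝ)+1)^(i+1)
        = ∑ t ∈ range (i+2), ((i+1).choose t : ℝ) * (m:ℝ)^t := by
      intro m
      have := add_pow (m:ℝ) 1 (i+1)
      rw [this]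
      refine Finset.sum_congr rfl fun t ht => by ring
    calc (∑ m ∈ range (k+1), (-1:ℝ)^(k-m) * (k.choose m : ℝ) * ((m:ℝ)+1)^(i+1))
        = ∑ m ∈ range (k+1), ∑ t ∈ range (i+2),
            ((i+1).choose t : ℝ) * ((-1:ℝ)^(k-m) * (k.choose m : ℝ) * (m:ℝ)^t) := by
          refine Finset.sum_congr rfl fun m hm => ?_
          rw [hexp m, Finset.mul_sum]
          refine Finset.sum_congr rfl fun t ht => by ring
      _ = ∑ t ∈ range (i+2), ((i+1).choose t : ℝ) * Sfd k t := by
          rw [Finset.sum_comm]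
          refine Finset.sum_congr rfl fun t ht => ?_
          rw [Sfd, Finset.mul_sum]
      _ = (∑ t ∈ range (i+1), ((i+1).choose t : ℝ) * Sfd k t) + Sfd k (i+1) := by
          rw [Finset.sum_range_succ, Nat.choose_self, Nat.cast_one, one_mul]
  rw [h1, h2, h3]; ring

lemma Sfd_eq (k : ℕ) : ∀ i ≤ k, Sfd k i = if i = k then (k.factorial : ℝ) else 0 := by
  induction k with
  | zero =>
    intro i hi
    interval_cases i
    simp [Sfd]
  | succ k ih =>
    intro i hi
    match i with
    | 0 =>
      rw [if_neg (by omega)]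
      have h := add_pow (1:ℝ) (-1) (k+1)
      simp only [add_neg_cancel, zero_pow (Nat.succ_ne_zero k), one_pow, one_mul] at h
      rw [Sfd]
      simp only [pow_zero, mul_one]
      rw [← h]
    | i+1 =>
      rw [Sfd_rec]
      rcases eq_or_lt_of_le hi with heq | hlt
      · -- i+1 = k+1, so i = k
        have hik : i = k := by omega
        subst hik
        rw [if_pos rfl]
        rw [Finset.sum_eq_single_of_mem i (Finset.self_mem_range_succ i)]
        · rw [ih i le_rfl, if_pos rfl, Nat.choose_succ_self_right]
          rw [Nat.factorial_succ]
          push_cast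
          ring
        · intro t ht htne
          have ht' : t < i := by
            have := Finset.mem_range.mp ht; omega
          rw [ih t (by omega), if_neg (by omega), mul_zero]
      · -- i+1 < k+1, i.e. i < k
        rw [if_neg (by omega)]
        refine Finset.sum_eq_zero fun t ht => ?_
        have ht' : t ≤ i := by have := Finset.mem_range.mp ht; omega
        rw [ih t (by omega), if_neg (by omega), mul_zero]

lemma polar {E : Type*} [NormedAddCommGroup E] [NormedSpace ℝ E] {k : ℕ}
    (g : ContinuousMultilinearMap ℝ (fun _ : Fin k => E) ℝ) (a y : E) :
    (k.factorial : ℝ) * g (fun _ => y)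
      = ∑ j ∈ range (k+1), (-1:ℝ)^(k-j) * (k.choose j) * g (fun _ => a + (j:ℝ) • y) := by
  classical
  have hexp : ∀ j : ℕ, g (fun _ => a + (j:ℝ) • y)
      = ∑ s : Finset (Fin k),
          (j:ℝ)^s.card * g (s.piecewise (fun _ => y) (fun _ => a)) := by
    intro j
    have h1 : (fun _ : Fin k => a + (j:ℝ) • y)
        = (fun _ : Fin k => (j:ℝ) • y) + (fun _ : Fin k => a) := by
      funext i; simp [add_comm]
    have hadd := g.toMultilinearMap.map_add_univ (fun _ : Fin k => (j:ℝ) • y) (fun _ : Fin k => a)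
    simp only [ContinuousMultilinearMap.coe_coe] at hadd
    rw [h1, hadd]
    refine Finset.sum_congr rfl fun s _ => ?_
    have h2 : s.piecewise (fun _ : Fin k => (j:ℝ) • y) (fun _ => a)
        = s.piecewise (fun i => (j:ℝ) • (s.piecewise (fun _ : Fin k => y) (fun _ => a)) i)
            (s.piecewise (fun _ : Fin k => y) (fun _ => a)) := by
      funext i
      by_cases hi : i ∈ s <;> simp [Finset.piecewise, hi]
    have hsm := g.toMultilinearMap.map_piecewise_smul (fun _ : Fin k => (j:ℝ))
      (s.piecewise (fun _ : Fin k => y) (fun _ : Fin k => a)) s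
    simp only [ContinuousMultilinearMap.coe_coe] at hsm
    rw [h2, hsm]
    simp [Finset.prod_const, smul_eq_mul]
  symm
  calc ∑ j ∈ range (k+1), (-1:ℝ)^(k-j) * (k.choose j) * g (fun _ => a + (j:ℝ) • y)
      = ∑ j ∈ range (k+1), ∑ s : Finset (Fin k),
          g (s.piecewise (fun _ => y) (fun _ => a))
            * ((-1:ℝ)^(k-j) * (k.choose j) * (j:ℝ)^s.card) := by
        refine Finset.sum_congr rfl fun j _ => ?_
        rw [hexp j, Finset.mul_sum]
        exact Finset.sum_congr rfl fun s _ => by ring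
    _ = ∑ s : Finset (Fin k), g (s.piecewise (fun _ => y) (fun _ => a)) * Sfd k s.card := by
        rw [Finset.sum_comm]
        exact Finset.sum_congr rfl fun s _ => by rw [Sfd, Finset.mul_sum]
    _ = (k.factorial : ℝ) * g (fun _ => y) := by
        rw [Finset.sum_eq_single_of_mem Finset.univ (Finset.mem_univ _)]
        · rw [Sfd_eq k (Finset.univ.card) (by simp), if_pos (by simp)]
          rw [Finset.piecewise_univ]
          ring
        · intro s _ hs
          have hcard : s.card ≠ k := fun h => hs (Finset.card_eq_iff_eq_univ s |>.mp (by simpa using h))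
          rw [Sfd_eq k s.card (by simpa using Finset.card_le_univ s), if_neg hcard, mul_zero]


lemma ratio_le_three (m : ℕ) (hm : 0 < m) : (((m:ℝ)+1)/m)^m ≤ 3 := by
  have hm' : (0:ℝ) < m := by exact_mod_cast hm
  have h1 : ((m:ℝ)+1)/m = 1 + 1/m := by field_simp
  have h2 : (1:ℝ) + 1/m ≤ Real.exp (1/m) := by have := Real.add_one_le_exp (1/(m:ℝ)); linarith
  have h3 : ((1:ℝ) + 1/m)^m ≤ Real.exp (1/m)^m := by
    apply pow_le_pow_left₀ (by positivity) h2
  have h4 : Real.exp (1/m)^m = Real.exp 1 := by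
    rw [← Real.exp_nat_mul]
    congr 1
    field_simp
  have h5 : Real.exp 1 ≤ 3 := by
    have := Real.exp_one_lt_d9
    linarith
  rw [h1]
  calc ((1:ℝ) + 1/m)^m ≤ Real.exp (1/m)^m := h3
    _ = Real.exp 1 := h4
    _ ≤ 3 := h5

lemma succ_pow_le (k : ℕ) : ((k:ℝ)+1)^k ≤ 3^k * (k.factorial : ℝ) := by
  induction k with
  | zero => norm_num
  | succ k ih =>
    have hpos : (0:ℝ) < (k:ℝ) + 1 := by positivity
    have key : ((k:ℝ)+2)^(k+1) ≤ 3 * ((k:ℝ)+1)^(k+1) := by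
      have h := ratio_le_three (k+1) k.succ_pos
      push_cast at h
      have h2 : ((((k:ℝ)+1+1)/((k:ℝ)+1))^(k+1)) * ((k:ℝ)+1)^(k+1) ≤ 3 * ((k:ℝ)+1)^(k+1) := by
        apply mul_le_mul_of_nonneg_right h (by positivity)
      rw [← mul_pow] at h2
      have h3 : (((k:ℝ)+1+1)/((k:ℝ)+1)) * ((k:ℝ)+1) = (k:ℝ)+2 := by field_simp; ring
      rw [h3] at h2
      convert h2 using 2
    have hcast : ((k+1:ℕ):ℝ) + 1 = (k:ℝ) + 2 := by push_cast; ring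
    rw [hcast]
    calc ((k:ℝ)+2)^(k+1) = ((k:ℝ)+2)^(k+1) := rfl
      _ ≤ 3 * ((k:ℝ)+1)^(k+1) := key
      _ = 3 * (((k:ℝ)+1) * ((k:ℝ)+1)^k) := by ring
      _ ≤ 3 * (((k:ℝ)+1) * (3^k * (k.factorial : ℝ))) := by
          apply mul_le_mul_of_nonneg_left _ (by norm_num)
          apply mul_le_mul_of_nonneg_left ih (by positivity)
      _ = 3^(k+1) * (((k:ℝ)+1) * (k.factorial : ℝ)) := by ring
      _ = 3^(k+1) * ((k+1).factorial : ℝ) := by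
          rw [Nat.factorial_succ]; push_cast; ring

end Aux

/-- If `∑ₖ f k (x,…,x)` converges for all `x` in an absorbing subset of a real Banach
space, where the `f k` are continuous symmetric `k`-linear forms, then the values
`f k (x,…,x)` are uniformly bounded for `x` in some neighborhood of `0`. -/
theorem stmt_8 {E : Type*} [NormedAddCommGroup E] [NormedSpace ℝ E] [CompleteSpace E]
    (f : ∀ k : ℕ, ContinuousMultilinearMap ℝ (fun _ : Fin k => E) ℝ)
    (hsymm : ∀ (k : ℕ) (σ : Equiv.Perm (Fin k)) (x : Fin k → E), f k (x ∘ σ) = f k x)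
    (A : Set E) (hA : ∀ x : E, ∃ t > (0 : ℝ), t • x ∈ A)
    (hconv : ∀ x ∈ A, ∃ l : ℝ,
      Tendsto (fun N => ∑ k ∈ Finset.range N, f k (fun _ => x)) atTop (nhds l)) :
    ∃ U ∈ nhds (0 : E), ∃ C : ℝ, ∀ (k : ℕ), ∀ x ∈ U, |f k (fun _ => x)| ≤ C := by
  classical
  -- scalar multiplication formula
  have hsc : ∀ (k : ℕ) (c : ℝ) (x : E), f k (fun _ => c • x) = c ^ k * f k (fun _ => x) := by
    intro k c x
    have := (f k).toMultilinearMap.map_smul_univ (fun _ : Fin k => c) (fun _ : Fin k => x)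
    simp only [ContinuousMultilinearMap.coe_coe] at this
    simpa [Finset.prod_const, smul_eq_mul] using this
  -- Step 1: pointwise bounds via convergence and absorption
  have key : ∀ x : E, ∃ n m : ℕ,
      ∀ k : ℕ, |f k (fun _ => (((m:ℝ)+1)⁻¹) • x)| ≤ n := by
    intro x
    obtain ⟨t, ht, htA⟩ := hA x
    obtain ⟨l, hl⟩ := hconv _ htA
    have hterm : Tendsto (fun k => f k (fun _ => t • x)) atTop (nhds 0) := by
      have h1 := (hl.comp (tendsto_add_atTop_nat 1)).sub hl
      rw [sub_self] at h1
      have h2 : (fun N => (∑ k ∈ Finset.range (N+1), f k (fun _ => t • x))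
          - ∑ k ∈ Finset.range N, f k (fun _ => t • x))
          = fun N => f N (fun _ => t • x) := by
        funext N; rw [Finset.sum_range_succ]; ring
      rwa [show ((fun N => ∑ k ∈ Finset.range N, f k (fun _ => t • x)) ∘ (fun N => N + 1))
        = fun N => ∑ k ∈ Finset.range (N+1), f k (fun _ => t • x) from rfl, h2] at h1
    obtain ⟨K, hK⟩ := Metric.tendsto_atTop.mp hterm 1 one_pos
    set C0 : ℝ := 1 + ∑ k ∈ Finset.range K, |f k (fun _ => t • x)| with hC0def
    have hC0nn : ∀ k, |f k (fun _ => t • x)| ≤ C0 := by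
      intro k
      have hsumnn : (0:ℝ) ≤ ∑ k ∈ Finset.range K, |f k (fun _ => t • x)| :=
        Finset.sum_nonneg fun _ _ => abs_nonneg _
      rcases lt_or_ge k K with h | h
      · have := Finset.single_le_sum (f := fun k => |f k (fun _ => t • x)|)
          (fun i _ => abs_nonneg _) (Finset.mem_range.mpr h)
        linarith
      · have := hK k h
        rw [Real.dist_eq, sub_zero] at this
        linarith
    obtain ⟨n, hn⟩ := exists_nat_ge C0
    obtain ⟨m, hm⟩ := exists_nat_ge t⁻¹
    refine ⟨n, m, fun k => ?_⟩
    have hm1 : (0:ℝ) < (m:ℝ) + 1 := by positivity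
    set s : ℝ := ((m:ℝ)+1)⁻¹ * t⁻¹ with hs
    have hspos : 0 < s := by positivity
    have hsle : s ≤ 1 := by
      rw [hs, ← mul_inv]
      have h1 : (1:ℝ) ≤ ((m:ℝ)+1) * t := by
        have h2 : t⁻¹ ≤ (m:ℝ)+1 := by linarith
        calc (1:ℝ) = t⁻¹ * t := by field_simp
          _ ≤ ((m:ℝ)+1) * t := by apply mul_le_mul_of_nonneg_right h2 ht.le
      exact inv_le_one_of_one_le₀ h1
    have heq : ((m:ℝ)+1)⁻¹ • x = s • (t • x) := by
      rw [smul_smul, hs]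
      congr 1
      field_simp
    rw [heq, hsc, abs_mul, abs_pow, abs_of_pos hspos]
    calc s ^ k * |f k (fun _ => t • x)| ≤ 1 * C0 := by
          apply mul_le_mul (pow_le_one₀ hspos.le hsle) (hC0nn k) (abs_nonneg _) zero_le_one
      _ ≤ n := by linarith
  -- Step 2: Baire category
  have hBaire : ∃ p : ℕ × ℕ,
      (interior {x : E | ∀ k, |f k (fun _ => (((p.2:ℝ)+1)⁻¹) • x)| ≤ p.1}).Nonempty := by
    apply nonempty_interior_of_iUnion_of_closed
    · rintro ⟨n, m⟩
      have : {x : E | ∀ k, |f k (fun _ => (((m:ℝ)+1)⁻¹) • x)| ≤ (n:ℝ)}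
          = ⋂ k, {x : E | |f k (fun _ => (((m:ℝ)+1)⁻¹) • x)| ≤ (n:ℝ)} := by
        ext x; simp [Set.mem_iInter]
      rw [this]
      refine isClosed_iInter fun k => ?_
      have hcont : Continuous fun x : E => |f k (fun _ => (((m:ℝ)+1)⁻¹) • x)| := by
        apply Continuous.abs
        exact (f k).cont.comp (continuous_pi fun _ => continuous_id.const_smul _)
      exact isClosed_le hcont continuous_const
    · rw [Set.eq_univ_iff_forall]
      intro x
      obtain ⟨n, m, h⟩ := key x
      exact Set.mem_iUnion.mpr ⟨⟨n, m⟩, h⟩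
  obtain ⟨⟨n, m⟩, x₀, hx₀⟩ := hBaire
  obtain ⟨ε, hε, hball⟩ := Metric.isOpen_iff.mp isOpen_interior x₀ hx₀
  set c : ℝ := ((m:ℝ)+1)⁻¹ with hc
  have hcpos : 0 < c := by positivity
  set z₀ : E := c • x₀ with hz₀
  set r : ℝ := c * ε with hr
  have hrpos : 0 < r := by positivity
  have hball' : ∀ y : E, dist y z₀ < r → ∀ k, |f k (fun _ => y)| ≤ n := by
    intro y hy k
    have hmem : c⁻¹ • y ∈ Metric.ball x₀ ε := by
      rw [Metric.mem_ball, dist_eq_norm]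
      have h1 : c⁻¹ • y - x₀ = c⁻¹ • (y - z₀) := by
        rw [smul_sub, hz₀, inv_smul_smul₀ hcpos.ne']
      rw [h1, norm_smul, Real.norm_eq_abs, abs_of_pos (inv_pos.mpr hcpos)]
      rw [dist_eq_norm] at hy
      calc c⁻¹ * ‖y - z₀‖ < c⁻¹ * r := by
            apply mul_lt_mul_of_pos_left hy (inv_pos.mpr hcpos)
        _ = ε := by rw [hr]; field_simp
    have hmem2 := interior_subset (hball hmem)
    have h2 := hmem2 k
    simp only [Set.mem_setOf_eq] at h2
    rwa [smul_inv_smul₀ hcpos.ne'] at h2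
  -- Step 3: polarization
  refine ⟨Metric.ball 0 (r/12), Metric.ball_mem_nhds 0 (by positivity), n, ?_⟩
  intro k y hy
  have hyn : ‖y‖ < r/12 := by rwa [Metric.mem_ball, dist_zero_right] at hy
  have hynn : (0:ℝ) ≤ ‖y‖ := norm_nonneg y
  have hk1 : (0:ℝ) < (k:ℝ) + 1 := by positivity
  set w : E := ((6:ℝ)/((k:ℝ)+1)) • y with hw
  have hwnorm : ‖w‖ ≤ 6/((k:ℝ)+1) * ‖y‖ := by
    rw [hw, norm_smul, Real.norm_eq_abs, abs_of_pos (by positivity)]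
  have hwball : ∀ j ∈ Finset.range (k+1), |f k (fun _ => z₀ + (j:ℝ) • w)| ≤ n := by
    intro j hj
    apply hball'
    rw [dist_eq_norm, add_sub_cancel_left, norm_smul, Real.norm_eq_abs,
      Nat.abs_cast]
    have hj' : (j:ℝ) ≤ (k:ℝ) + 1 := by
      exact_mod_cast Nat.le_of_lt_succ (Finset.mem_range.mp hj) |>.trans (Nat.le_succ k)
    calc (j:ℝ) * ‖w‖ ≤ ((k:ℝ)+1) * (6/((k:ℝ)+1) * ‖y‖) := by
          apply mul_le_mul hj' hwnorm (norm_nonneg _) hk1.le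
      _ = 6 * ‖y‖ := by field_simp
      _ < 6 * (r/12) := by linarith
      _ < r := by linarith
  have hpol := polar (f k) z₀ w
  have hfw : (k.factorial : ℝ) * |f k (fun _ => w)| ≤ 2^k * n := by
    have h1 : |(k.factorial : ℝ) * f k (fun _ => w)| ≤ 2^k * n := by
      rw [hpol]
      calc |∑ j ∈ Finset.range (k+1), (-1:ℝ)^(k-j) * (k.choose j) * f k (fun _ => z₀ + (j:ℝ) • w)|
          ≤ ∑ j ∈ Finset.range (k+1), |(-1:ℝ)^(k-j) * (k.choose j) * f k (fun _ => z₀ + (j:ℝ) • w)| :=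
            Finset.abs_sum_le_sum_abs _ _
        _ ≤ ∑ j ∈ Finset.range (k+1), (k.choose j : ℝ) * n := by
            apply Finset.sum_le_sum
            intro j hj
            rw [abs_mul, abs_mul, abs_pow, abs_neg, abs_one, one_pow, one_mul, Nat.abs_cast]
            exact mul_le_mul_of_nonneg_left (hwball j hj) (by positivity)
        _ = (∑ j ∈ Finset.range (k+1), (k.choose j : ℝ)) * n := by rw [← Finset.sum_mul]
        _ = 2^k * n := by
            rw [← Nat.cast_sum, Nat.sum_range_choose]
            push_cast; ring
    rwa [abs_mul, Nat.abs_cast] at h1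
  have hfac : (0:ℝ) < (k.factorial : ℝ) := by exact_mod_cast k.factorial_pos
  have hyw : f k (fun _ => y) = (((k:ℝ)+1)/6)^k * f k (fun _ => w) := by
    have : y = (((k:ℝ)+1)/6) • w := by
      rw [hw, smul_smul]
      have : ((k:ℝ)+1)/6 * (6/((k:ℝ)+1)) = 1 := by field_simp
      rw [this, one_smul]
    conv_lhs => rw [this]
    exact hsc k _ w
  rw [hyw, abs_mul, abs_pow, abs_of_pos (by positivity : (0:ℝ) < ((k:ℝ)+1)/6)]
  have hfwb : |f k (fun _ => w)| ≤ 2^k * n / (k.factorial : ℝ) := by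
    rw [le_div_iff₀ hfac]
    linarith [hfw]
  calc (((k:ℝ)+1)/6)^k * |f k (fun _ => w)|
      ≤ (((k:ℝ)+1)/6)^k * (2^k * n / (k.factorial : ℝ)) := by
        apply mul_le_mul_of_nonneg_left hfwb (by positivity)
    _ = ((k:ℝ)+1)^k * (2^k * n) / (6^k * (k.factorial : ℝ)) := by
        rw [div_pow]; field_simp
    _ ≤ (3^k * (k.factorial : ℝ)) * (2^k * n) / (6^k * (k.factorial : ℝ)) := by
        apply div_le_div_of_nonneg_right ?_ (by positivity)
        apply mul_le_mul_of_nonneg_right (succ_pow_le k) (by positivity)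
    _ = n := by
        rw [show (6:ℝ)^k = 3^k * 2^k by rw [← mul_pow]; norm_num]
        field_simp
end

section
/- Vector-valued Cauchy inequalities: let $E$ be a complex locally convex space, $c$ a holomorphic function from an open subset of $\mathbb{C}$ to $E$ (given locally by a convergent power series), $z$ a point of the domain and $r > 0$ less than the radius of convergence of $c$ at $z$ with the closed disc of radius $r$ about $z$ contained in the domain. Then for every $k$, $\frac{r^k}{k!} c^{(k)}(z)$ lies in the closed absolutely convex hull of $\{c(w) : |w - z| = r\}$. -/
/-!
Averaging the power series of `c` over the `N` points `z + r ζʲ`, `ζ` a primitive `N`-th root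
of unity, against the weights `ζ^(-jk) / N` keeps exactly the terms `rⁿ aₙ` with `n ≡ k [MOD N]`.
This average is an absolutely convex combination of values of `c` on the circle, and it differs
from `rᵏ aₖ` by a sum of terms of index at least `N`. Writing these as `(r/ρ)ⁿ • ρⁿ aₙ` for some
`r < ρ < R`, the vectors `ρⁿ aₙ` eventually lie in any given convex neighbourhood of `0`, and the
weights `(r/ρ)ⁿ` add up to at most `1` once `N` is large, so the average tends to `rᵏ aₖ`.
-/

/-- The set of absolutely convex combinations (over `ℂ`) of elements of `S`:
finite sums `∑ λᵢ sᵢ` with `sᵢ ∈ S` and `∑ |λᵢ| ≤ 1`.  Its closure is the closed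
absolutely convex hull of `S`. -/
def absConvexCombinations {E : Type*} [AddCommGroup E] [Module ℂ E] (S : Set E) : Set E :=
  {x | ∃ (n : ℕ) (lam : Fin n → ℂ) (s : Fin n → E),
    (∀ i, s i ∈ S) ∧ (∑ i, ‖lam i‖) ≤ 1 ∧ x = ∑ i, lam i • s i}

open Filter Topology Finset

theorem IsPrimitiveRoot.sum_pow_mul_inv_pow {K : Type*} [Field K] {ζ : K} {N : ℕ} [NeZero N]
    (hζ : IsPrimitiveRoot ζ N) (n k : ℕ) :
    ∑ j ∈ range N, (ζ ^ n * (ζ ^ k)⁻¹) ^ j = if n ≡ k [MOD N] then (N : K) else 0 := by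
  have hζk : ζ ^ k ≠ 0 := pow_ne_zero _ (hζ.ne_zero (NeZero.ne N))
  have hpow : ζ ^ n = ζ ^ k ↔ n ≡ k [MOD N] := by
    rw [hζ.eq_orderOf]
    exact (hζ.isOfFinOrder (NeZero.ne N)).pow_eq_pow_iff_modEq
  split_ifs with h
  · simp [hpow.2 h, hζk]
  · have hne : ζ ^ n * (ζ ^ k)⁻¹ ≠ 1 := fun h1 => h (hpow.1 (mul_inv_eq_one₀ hζk |>.1 h1))
    rw [geom_sum_eq hne, mul_pow, inv_pow, ← pow_mul, ← pow_mul, mul_comm n, mul_comm k,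
      pow_mul, pow_mul, hζ.pow_eq_one]
    simp

theorem IsPrimitiveRoot.hasSum_ite_modEq {K E : Type*} [Field K] [AddCommMonoid E] [Module K E]
    [TopologicalSpace E] [ContinuousAdd E] [ContinuousConstSMul K E] {ζ : K} {N : ℕ} [NeZero N]
    (hζ : IsPrimitiveRoot ζ N) {u : K} {a c : ℕ → E}
    (hc : ∀ j, HasSum (fun n => (u * ζ ^ j) ^ n • a n) (c j)) (k : ℕ) :
    HasSum (fun n => (if n ≡ k [MOD N] then u ^ n else 0) • a n)
      (∑ j ∈ range N, ((N : K)⁻¹ * ((ζ ^ j) ^ k)⁻¹) • c j) := by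
  have hN : (N : K) ≠ 0 := hζ.neZero'.out
  convert hasSum_sum fun j _ => (hc j).const_smul ((N : K)⁻¹ * ((ζ ^ j) ^ k)⁻¹) using 1
  funext n
  simp only [smul_smul, ← sum_smul]
  congr 1
  calc (if n ≡ k [MOD N] then u ^ n else 0)
      = (N : K)⁻¹ * u ^ n * ∑ j ∈ range N, (ζ ^ n * (ζ ^ k)⁻¹) ^ j := by
        rw [hζ.sum_pow_mul_inv_pow]
        split_ifs
        · field_simp
        · simp
    _ = _ := by
        rw [mul_sum]
        refine sum_congr rfl fun j _ => ?_
        rw [mul_pow, mul_pow, inv_pow, ← pow_mul, ← pow_mul, ← pow_mul, ← pow_mul, mul_comm n,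
          mul_comm k]
        ring

theorem sum_smul_mem_absConvexCombinations {E : Type*} [AddCommGroup E] [Module ℂ E] {S : Set E}
    {N : ℕ} {lam : ℕ → ℂ} {s : ℕ → E} (hs : ∀ j < N, s j ∈ S)
    (hlam : ∑ j ∈ range N, ‖lam j‖ ≤ 1) :
    ∑ j ∈ range N, lam j • s j ∈ absConvexCombinations S :=
  ⟨N, fun j => lam j, fun j => s j, fun j => hs j j.2,
    by rwa [Fin.sum_univ_eq_sum_range (fun j => ‖lam j‖)],
    (Fin.sum_univ_eq_sum_range (fun j => lam j • s j) N).symm⟩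

section Convex

variable {E : Type*} [AddCommGroup E] [Module ℝ E] {W : Set E}

theorem Convex.sum_smul_mem_of_sum_le_one (hW : Convex ℝ W) (h0 : (0 : E) ∈ W) {ι : Type*}
    {F : Finset ι} {μ : ι → ℝ} {b : ι → E} (hμ : ∀ i ∈ F, 0 ≤ μ i) (hμ1 : ∑ i ∈ F, μ i ≤ 1)
    (hb : ∀ i ∈ F, b i ∈ W) : ∑ i ∈ F, μ i • b i ∈ W := by
  rcases (sum_nonneg hμ).eq_or_lt with hm | hm
  · rw [sum_eq_zero fun i hi => by rw [(sum_eq_zero_iff_of_nonneg hμ).1 hm.symm i hi, zero_smul]]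
    exact h0
  · have hcomb : ∑ i ∈ F, (μ i / ∑ i ∈ F, μ i) • b i ∈ W :=
      hW.sum_mem (fun i hi => div_nonneg (hμ i hi) hm.le) (by rw [← sum_div, div_self hm.ne']) hb
    convert hW.smul_mem_of_zero_mem h0 hcomb ⟨hm.le, hμ1⟩ using 1
    rw [smul_sum]
    refine sum_congr rfl fun i _ => ?_
    rw [smul_smul, mul_div_cancel₀ _ hm.ne']

theorem Convex.mem_closure_of_hasSum [TopologicalSpace E] (hW : Convex ℝ W) (h0 : (0 : E) ∈ W)
    {ι : Type*} {μ : ι → ℝ} {b : ι → E} {x : E} (hμ : ∀ i, 0 ≤ μ i)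
    (hμ1 : ∀ F : Finset ι, ∑ i ∈ F, μ i ≤ 1) (hb : ∀ i, μ i ≠ 0 → b i ∈ W)
    (hx : HasSum (fun i => μ i • b i) x) : x ∈ closure W := by
  classical
  refine mem_closure_of_tendsto hx (Eventually.of_forall fun F => ?_)
  rw [← sum_filter_of_ne (p := fun i => μ i ≠ 0) fun i _ h => left_ne_zero_of_smul h]
  exact hW.sum_smul_mem_of_sum_le_one h0 (fun i _ => hμ i) (hμ1 _)
    fun i hi => hb i (mem_filter.1 hi).2

end Convex

theorem hasSum_ite_le_pow {t : ℝ} (ht0 : 0 ≤ t) (ht1 : t < 1) (N : ℕ) :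
    HasSum (fun n => if N ≤ n then t ^ n else 0) (t ^ N * (1 - t)⁻¹) := by
  rw [← hasSum_nat_add_iff' N, sum_eq_zero fun i hi => if_neg (by simpa using hi), sub_zero]
  simpa [pow_add, mul_comm] using (hasSum_geometric_of_lt_one ht0 ht1).mul_left (t ^ N)

theorem tendsto_of_hasSum_ite_modEq {E : Type*} [AddCommGroup E] [Module ℝ E] [TopologicalSpace E]
    [IsTopologicalAddGroup E] [LocallyConvexSpace ℝ E] {b : ℕ → E} (hb : Tendsto b atTop (𝓝 0))
    {t : ℝ} (ht0 : 0 ≤ t) (ht1 : t < 1) (k : ℕ) {S : ℕ → E}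
    (hS : ∀ N, k < N → HasSum (fun n => (if n ≡ k [MOD N] then t ^ n else 0) • b n) (S N)) :
    Tendsto S atTop (𝓝 (t ^ k • b k)) := by
  rw [← tendsto_sub_nhds_zero_iff, (closed_nhds_basis 0).tendsto_right_iff]
  rintro C ⟨hC, hCc⟩
  obtain ⟨W, ⟨hW, hWconv⟩, hWC⟩ := (LocallyConvexSpace.convex_basis_zero ℝ E).mem_iff.1 hC
  obtain ⟨n₀, hn₀⟩ := eventually_atTop.1 (hb.eventually hW)
  obtain ⟨N₁, hN₁⟩ := eventually_atTop.1
    ((tendsto_pow_atTop_nhds_zero_of_lt_one ht0 ht1).eventually (ge_mem_nhds (sub_pos.2 ht1)))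
  filter_upwards [eventually_ge_atTop (max (k + 1) (max n₀ N₁))] with N hN
  simp only [max_le_iff] at hN
  obtain ⟨hkN, hn₀N, hN₁N⟩ := hN
  set μ : ℕ → ℝ := fun n => if n ≡ k [MOD N] ∧ n ≠ k then t ^ n else 0
  have hμ_ne : ∀ n, μ n ≠ 0 → N ≤ n := fun n hn => by
    by_contra hlt
    have hmod : n ≡ k [MOD N] ∧ n ≠ k := by by_contra h; exact hn (if_neg h)
    exact hmod.2 (hmod.1.eq_of_lt_of_lt (not_le.1 hlt) hkN)
  have hμ_le : ∀ n, μ n ≤ if N ≤ n then t ^ n else 0 := fun n => by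
    by_cases hn : μ n = 0
    · rw [hn]; split_ifs <;> positivity
    · rw [if_pos (hμ_ne n hn)]
      simp only [μ]
      split_ifs
      exacts [le_rfl, pow_nonneg ht0 n]
  have hsum : HasSum (fun n => μ n • b n) (S N - t ^ k • b k) := by
    convert (hS N hkN).sub (hasSum_ite_eq k (t ^ k • b k)) using 1
    funext n
    by_cases hn : n = k
    · subst hn; simp [μ, Nat.ModEq.refl]
    · simp [μ, hn]
  refine hCc.closure_subset_iff.2 hWC (hWconv.mem_closure_of_hasSum (mem_of_mem_nhds hW)
    (fun n => by simp only [μ]; split_ifs <;> positivity) (fun F => ?_)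
    (fun n hn => hn₀ n (hn₀N.trans (hμ_ne n hn))) hsum)
  calc ∑ n ∈ F, μ n ≤ ∑ n ∈ F, if N ≤ n then t ^ n else 0 := sum_le_sum fun n _ => hμ_le n
    _ ≤ t ^ N * (1 - t)⁻¹ :=
        sum_le_hasSum F (fun n _ => by split_ifs <;> positivity) (hasSum_ite_le_pow ht0 ht1 N)
    _ ≤ 1 := by
        rw [← div_eq_mul_inv, div_le_one (sub_pos.2 ht1)]
        exact (pow_le_pow_of_le_one ht0 ht1.le hN₁N).trans (hN₁ N₁ le_rfl)

theorem norm_add_ofReal_mul_pow_sub (z : ℂ) {ζ : ℂ} (hζ : ‖ζ‖ = 1) {r : ℝ} (hr : 0 ≤ r) (j : ℕ) :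
    ‖z + r * ζ ^ j - z‖ = r := by
  simp [norm_pow, hζ, abs_of_nonneg hr]

theorem IsPrimitiveRoot.sum_smul_mem_absConvexCombinations {E : Type*} [AddCommGroup E]
    [Module ℂ E] (c : ℂ → E) (z : ℂ) {r : ℝ} (hr : 0 ≤ r) {ζ : ℂ} {N : ℕ} [NeZero N]
    (hζ : IsPrimitiveRoot ζ N) (k : ℕ) :
    ∑ j ∈ range N, ((N : ℂ)⁻¹ * ((ζ ^ j) ^ k)⁻¹) • c (z + r * ζ ^ j) ∈
      absConvexCombinations {y : E | ∃ w : ℂ, ‖w - z‖ = r ∧ y = c w} := by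
  have hζ1 : ‖ζ‖ = 1 := hζ.norm'_eq_one (NeZero.ne N)
  refine _root_.sum_smul_mem_absConvexCombinations
    (fun j _ => ⟨_, norm_add_ofReal_mul_pow_sub z hζ1 hr j, rfl⟩) ?_
  simp [norm_pow, hζ1, NeZero.ne N]

theorem div_pow_smul_ofReal_pow_smul {E : Type*} [AddCommGroup E] [Module ℂ E] [Module ℝ E]
    [IsScalarTower ℝ ℂ E] (r : ℝ) {ρ : ℝ} (hρ : ρ ≠ 0) (n : ℕ) (y : E) :
    ((r / ρ) ^ n : ℝ) • ((ρ : ℂ) ^ n • y) = (r : ℂ) ^ n • y := by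
  rw [← algebraMap_smul ℂ, smul_smul, Complex.coe_algebraMap]
  congr 1
  push_cast
  rw [← mul_pow, div_mul_cancel₀ _ (by exact_mod_cast hρ)]

/-- Vector valued Cauchy inequalities: if `c` is a holomorphic curve in a complex locally
convex space `E`, given on the ball of radius `R` about `z` by the convergent power series
`c w = ∑ₙ (w-z)ⁿ • aₙ` (so that `c⁽ᵏ⁾(z)/k! = aₖ`), and `0 < r < R`, then for every `k`
the vector `(rᵏ/k!) • c⁽ᵏ⁾(z) = rᵏ • aₖ` lies in the closed absolutely convex hull of
`{c w : |w - z| = r}`. -/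
theorem stmt_19 {E : Type*} [AddCommGroup E] [Module ℂ E] [Module ℝ E]
    [IsScalarTower ℝ ℂ E] [TopologicalSpace E] [IsTopologicalAddGroup E]
    [ContinuousSMul ℂ E] [LocallyConvexSpace ℝ E]
    (c : ℂ → E) (z : ℂ) (a : ℕ → E) (R r : ℝ) (hr : 0 < r) (hrR : r < R)
    (hc : ∀ w : ℂ, ‖w - z‖ < R → HasSum (fun n : ℕ => (w - z) ^ n • a n) (c w)) :
    ∀ k : ℕ, ((r : ℂ) ^ k) • a k ∈
      closure (absConvexCombinations {y : E | ∃ w : ℂ, ‖w - z‖ = r ∧ y = c w}) := by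
  intro k
  obtain ⟨ρ, hrρ, hρR⟩ := exists_between hrR
  have hρ0 : 0 < ρ := hr.trans hrρ
  have hb : Tendsto (fun n => (ρ : ℂ) ^ n • a n) atTop (𝓝 0) := by
    have h := hc (z + ρ) (by simpa [abs_of_pos hρ0] using hρR)
    simpa using h.summable.tendsto_atTop_zero
  set ζ : ℕ → ℂ := fun N => Complex.exp (2 * Real.pi * Complex.I / N)
  have hζ : ∀ N, 0 < N → IsPrimitiveRoot (ζ N) N := fun N hN =>
    Complex.isPrimitiveRoot_exp N hN.ne'
  set S : ℕ → E := fun N =>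
    ∑ j ∈ range N, ((N : ℂ)⁻¹ * ((ζ N ^ j) ^ k)⁻¹) • c (z + r * ζ N ^ j)
  have hS : ∀ N, k < N → HasSum
      (fun n => (if n ≡ k [MOD N] then (r / ρ) ^ n else 0) • ((ρ : ℂ) ^ n • a n)) (S N) := by
    intro N hN
    have hζN := hζ N (by omega)
    have : NeZero N := ⟨by omega⟩
    have hζ1 : ‖ζ N‖ = 1 := hζN.norm'_eq_one (by omega)
    convert hζN.hasSum_ite_modEq (u := (r : ℂ)) (a := a) (fun j => by
      simpa using hc _ ((norm_add_ofReal_mul_pow_sub z hζ1 hr.le j).trans_lt hrR)) k using 2 with n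
    split_ifs
    · exact div_pow_smul_ofReal_pow_smul r hρ0.ne' n (a n)
    · simp
  have hlim := tendsto_of_hasSum_ite_modEq hb (by positivity) ((div_lt_one hρ0).2 hrρ) k hS
  rw [div_pow_smul_ofReal_pow_smul r hρ0.ne'] at hlim
  refine mem_closure_of_tendsto hlim ((eventually_gt_atTop 0).mono fun N hN => ?_)
  have : NeZero N := ⟨hN.ne'⟩
  exact (hζ N hN).sum_smul_mem_absConvexCombinations c z hr.le k
end
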